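/- Let A be an n×n matrix with n ≥ 3 and a_{1,1} ≠ 0 (entries in a field). Then det A = det B / (a_{1,1})^{n-2}, where B is the (n-1)×(n-1) matrix with b_{i,j} = a_{1,1}·a_{i+1,j+1} − a_{1,j+1}·a_{i+1,1}. -/

import Mathlib

/-!
Scale rows `2, …, n` of `A` by the pivot `a₁₁`, which multiplies the determinant by
`a₁₁ ^ (n - 1)`, then subtract `a_{i1}` times row `1` from row `i`. The first column becomes
`(a₁₁, 0, …, 0)` and the lower-right block is exactly the condensed matrix `B`, so
`a₁₁ * det B = a₁₁ ^ (n - 1) * det A`; dividing by `a₁₁ ^ (n - 1)` gives the claim.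
-/

namespace Matrix

variable {R : Type*} [CommRing R] {m : ℕ}

theorem det_succ_eq_mul_det_submatrix_succ_of_col_zero
    (A : Matrix (Fin (m + 1)) (Fin (m + 1)) R) (hA : ∀ i : Fin m, A i.succ 0 = 0) :
    A.det = A 0 0 * (A.submatrix Fin.succ Fin.succ).det := by
  rw [det_succ_column_zero, Fin.sum_univ_succ]
  simp [hA]

def chioCondensation (A : Matrix (Fin (m + 1)) (Fin (m + 1)) R) : Matrix (Fin m) (Fin m) R :=
  of fun i j => A 0 0 * A i.succ j.succ - A 0 j.succ * A i.succ 0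

theorem mul_det_chioCondensation (A : Matrix (Fin (m + 1)) (Fin (m + 1)) R) :
    A 0 0 * A.chioCondensation.det = A 0 0 ^ m * A.det := by
  let scaled : Matrix (Fin (m + 1)) (Fin (m + 1)) R :=
    of fun i j => (Fin.cons 1 fun _ => A 0 0 : Fin (m + 1) → R) i * A i j
  let reduced : Matrix (Fin (m + 1)) (Fin (m + 1)) R :=
    of fun i j => Fin.cases (A 0 j) (fun i => A 0 0 * A i.succ j - A i.succ 0 * A 0 j) i
  have det_scaled : scaled.det = A 0 0 ^ m * A.det := by
    rw [det_mul_column, Fin.prod_cons, Finset.prod_const, Finset.card_univ, Fintype.card_fin,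
      one_mul]
  have det_reduced : scaled.det = reduced.det := by
    refine det_eq_of_forall_row_eq_smul_add_const (Fin.cons 0 fun i => A i.succ 0) 0 rfl ?_
    intro i j
    cases i using Fin.cases <;> simp [scaled, reduced]
  have det_reduced_eq : reduced.det = A 0 0 * A.chioCondensation.det := by
    rw [det_succ_eq_mul_det_submatrix_succ_of_col_zero reduced fun i => by simp [reduced, mul_comm]]
    congr 2
    ext i j
    simp [reduced, chioCondensation, mul_comm]
  rw [← det_reduced_eq, ← det_reduced, det_scaled]

end Matrix

/-- Division form of Chiò condensation over a field, pivot `a₁₁ ≠ 0`. -/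
theorem chio_condensation_div
    {K : Type*} [Field K] (n : ℕ)
    (A : Matrix (Fin (n + 3)) (Fin (n + 3)) K) (h : A 0 0 ≠ 0) :
    A.det =
      (Matrix.det fun i j : Fin (n + 2) =>
        A 0 0 * A i.succ j.succ - A 0 j.succ * A i.succ 0) / (A 0 0) ^ (n + 1) := by
  rw [eq_div_iff (pow_ne_zero _ h)]
  refine mul_left_cancel₀ h ?_
  calc A 0 0 * (A.det * A 0 0 ^ (n + 1)) = A 0 0 ^ (n + 2) * A.det := by ring
    _ = A 0 0 * A.chioCondensation.det := (A.mul_det_chioCondensation).symm
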